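/- arXiv:2010.09565 — 2 statements merged into one kernel-verified Lean document; each statement's English description precedes it below -/
import Mathlib

section
/- Let d ≥ 2, let K ⊆ ℝ^d be a convex body and let δ ∈ (0, vol(K)). If K floats in equilibrium in direction ξ at level δ for every unit vector ξ ∈ S^{d−1}, then the surface of centers is a sphere centered at the center of mass of K: there exists R ≥ 0 such that ‖C_δ(ξ) − C(K)‖ = R for every ξ ∈ S^{d−1}. -/
/-!
Write `g ξ` for the center of buoyancy. All submerged parts have volume `δ`, and a convex body
contains no slab of volume zero, so the level `t` is Lipschitz in `ξ`; hence the submerged parts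
for `ξ` and `η` differ only inside a slab of width `O(‖ξ - η‖)` around `H(ξ)`. Comparing their
first moments in direction `ξ` gives `⟪g ξ - g η, ξ⟫ = O(‖ξ - η‖²)`: the surface of centers is
tangent to `H(ξ)` at `g ξ`. In equilibrium `g ξ - C(K)` is parallel to `ξ`, so
`‖g ξ - C(K)‖` varies only to second order along the sphere. Its radial extension therefore has
zero derivative on `ℝ^d \ {0}`, which is connected because `d ≥ 2`, so it is constant.
-/

open MeasureTheory Metric Set Filter
open scoped InnerProductSpace ENNReal Pointwise NNReal Topology

/-- The center of mass of a set `L` with respect to a measure `μ`. -/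
noncomputable def centroid {d : ℕ} (μ : Measure (EuclideanSpace ℝ (Fin d)))
    (L : Set (EuclideanSpace ℝ (Fin d))) : EuclideanSpace ℝ (Fin d) :=
  (μ L).toReal⁻¹ • ∫ x in L, x ∂μ

open scoped symmDiff

section ConvexBody

variable {E : Type*} [TopologicalSpace E] [AddCommGroup E] [Module ℝ E] [IsTopologicalAddGroup E]
  [ContinuousSMul ℝ E] [MeasurableSpace E] (μ : Measure E)
  [μ.IsOpenPosMeasure] {K : Set E} {φ : E → ℝ} {a b : ℝ}

theorem Convex.measure_interior_inter_preimage_Ioo_pos (hK : Convex ℝ K)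
    (hKint : (interior K).Nonempty) (hφ : Continuous φ) (hab : a < b)
    (ha : ∃ u ∈ K, φ u ≤ a) (hb : ∃ v ∈ K, b ≤ φ v) :
    0 < μ (interior K ∩ φ ⁻¹' Ioo a b) := by
  obtain ⟨u, hu, hua⟩ := ha
  obtain ⟨v, hv, hbv⟩ := hb
  have hcl : K ⊆ closure (interior K) := by
    rw [hK.closure_interior_eq_closure_of_nonempty_interior hKint]
    exact subset_closure
  obtain ⟨c, hac, hcb⟩ := exists_between hab
  obtain ⟨u', hu'c, hu'⟩ := mem_closure_iff.1 (hcl hu) _ (isOpen_Iio.preimage hφ)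
    (hua.trans_lt hac)
  obtain ⟨v', hv'c, hv'⟩ := mem_closure_iff.1 (hcl hv) _ (isOpen_Ioi.preimage hφ)
    (hcb.trans_le hbv)
  obtain ⟨z, hz, hzc⟩ := hK.interior.isPreconnected.intermediate_value hu' hv' hφ.continuousOn
    ⟨le_of_lt hu'c, le_of_lt hv'c⟩
  refine (isOpen_interior.inter (isOpen_Ioo.preimage hφ)).measure_pos μ ⟨z, hz, ?_⟩
  simpa [hzc] using ⟨hac, hcb⟩

theorem Convex.measure_inter_le_lt_measure_inter_le [OpensMeasurableSpace E] (hK : Convex ℝ K)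
    (hKint : (interior K).Nonempty) (hφ : Continuous φ) (hab : a < b)
    (hfin : μ (K ∩ {p | φ p ≤ a}) ≠ ∞) (ha : ∃ u ∈ K, φ u ≤ a) (hb : ∃ v ∈ K, b ≤ φ v) :
    μ (K ∩ {p | φ p ≤ a}) < μ (K ∩ {p | φ p ≤ b}) := by
  have hdisj : Disjoint (K ∩ {p | φ p ≤ a}) (interior K ∩ φ ⁻¹' Ioo a b) :=
    disjoint_left.2 fun x hx hx' => (not_lt.2 hx.2) hx'.2.1
  calc μ (K ∩ {p | φ p ≤ a})
      < μ (K ∩ {p | φ p ≤ a}) + μ (interior K ∩ φ ⁻¹' Ioo a b) :=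
        ENNReal.lt_add_right hfin
          (hK.measure_interior_inter_preimage_Ioo_pos μ hKint hφ hab ha hb).ne'
    _ = μ (K ∩ {p | φ p ≤ a} ∪ interior K ∩ φ ⁻¹' Ioo a b) :=
        (measure_union hdisj (isOpen_interior.inter (isOpen_Ioo.preimage hφ)).measurableSet).symm
    _ ≤ μ (K ∩ {p | φ p ≤ b}) := by
        refine measure_mono (union_subset (fun x hx => ⟨hx.1, hx.2.trans hab.le⟩) ?_)
        exact fun x hx => ⟨interior_subset hx.1, hx.2.2.le⟩

end ConvexBody

theorem le_add_mul_norm_sub_of_measure_inter_halfspace_eq {E : Type*} [NormedAddCommGroup E]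
    [InnerProductSpace ℝ E] [MeasurableSpace E] [BorelSpace E] (μ : Measure E)
    [μ.IsOpenPosMeasure] {K : Set E} (hK : Convex ℝ K) (hKint : (interior K).Nonempty) {M : ℝ}
    (hM : ∀ x ∈ K, ‖x‖ ≤ M) {ξ η : E} {s t : ℝ}
    (heq : μ (K ∩ {p | ⟪p, ξ⟫_ℝ ≤ s}) = μ (K ∩ {p | ⟪p, η⟫_ℝ ≤ t}))
    (hfin : μ (K ∩ {p | ⟪p, η⟫_ℝ ≤ t}) ≠ ∞) (hne : (K ∩ {p | ⟪p, η⟫_ℝ ≤ t}).Nonempty)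
    (hlt : μ (K ∩ {p | ⟪p, ξ⟫_ℝ ≤ s}) < μ K) :
    s ≤ t + M * ‖ξ - η‖ := by
  by_contra! hts
  set a := t + M * ‖ξ - η‖
  have hsub : K ∩ {p | ⟪p, η⟫_ℝ ≤ t} ⊆ K ∩ {p | ⟪p, ξ⟫_ℝ ≤ a} := by
    rintro x ⟨hx, hxt⟩
    refine ⟨hx, ?_⟩
    have h1 : ⟪x, ξ⟫_ℝ = ⟪x, η⟫_ℝ + ⟪x, ξ - η⟫_ℝ := by rw [inner_sub_right]; ring
    have h2 : ⟪x, ξ - η⟫_ℝ ≤ M * ‖ξ - η‖ :=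
      (real_inner_le_norm x _).trans (mul_le_mul_of_nonneg_right (hM x hx) (norm_nonneg _))
    simp only [mem_ofPred_eq] at hxt ⊢
    linarith
  have hle : μ (K ∩ {p | ⟪p, ξ⟫_ℝ ≤ a}) ≤ μ (K ∩ {p | ⟪p, ξ⟫_ℝ ≤ s}) :=
    measure_mono fun x hx => ⟨hx.1, hx.2.trans hts.le⟩
  have hb : ∃ v ∈ K, s ≤ ⟪v, ξ⟫_ℝ := by
    by_contra! h
    exact hlt.not_ge (measure_mono fun x hx => ⟨hx, (h x hx).le⟩)
  have hcont : Continuous fun p : E => ⟪p, ξ⟫_ℝ := continuous_id.inner continuous_const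
  obtain ⟨u, hu⟩ := hne
  have := hK.measure_inter_le_lt_measure_inter_le μ hKint hcont hts
    (ne_top_of_le_ne_top (heq ▸ hfin) hle) ⟨u, hsub hu⟩ hb
  exact (heq ▸ this).not_ge (measure_mono hsub)

theorem volume_closedBall_inter_slab_le {E : Type*} [NormedAddCommGroup E] [InnerProductSpace ℝ E]
    [FiniteDimensional ℝ E] [MeasurableSpace E] [BorelSpace E] {n : ℕ}
    (hn : Module.finrank ℝ E = n + 1) {ξ : E} (hξ : ‖ξ‖ = 1) (M c w : ℝ) :
    volume (closedBall (0 : E) M ∩ {x | |⟪x, ξ⟫_ℝ - c| ≤ w}) ≤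
      ENNReal.ofReal (2 * w) * ENNReal.ofReal (2 * M) ^ n := by
  -- an orthonormal basis `b` with `b 0 = ξ`; in its coordinates the set lies in a box
  obtain ⟨b, hb⟩ := Orthonormal.exists_orthonormalBasis_extension_of_card_eq
    (v := fun _ : Fin (n + 1) => ξ) (s := {0}) (by simpa using hn)
    (orthonormal_subsingleton_iff.2 fun _ => hξ)
  set I : Fin (n + 1) → Set ℝ := fun i => if i = 0 then Icc (c - w) (c + w) else Icc (-M) M
  have hcoord : MeasurePreserving (fun x => WithLp.ofLp (b.repr x)) :=
    (PiLp.volume_preserving_ofLp _).comp b.measurePreserving_repr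
  have hsub : closedBall (0 : E) M ∩ {x | |⟪x, ξ⟫_ℝ - c| ≤ w} ⊆
      (fun x => WithLp.ofLp (b.repr x)) ⁻¹' univ.pi I := by
    rintro x ⟨hxM, hxc : |⟪x, ξ⟫_ℝ - c| ≤ w⟩ i -
    simp only [b.repr_apply_apply, I]
    split_ifs with hi
    · rw [hi, hb 0 rfl, real_inner_comm]
      exact ⟨by linarith [(abs_le.1 hxc).1], by linarith [(abs_le.1 hxc).2]⟩
    · have h := abs_real_inner_le_norm (b i) x
      rw [b.orthonormal.1 i, one_mul] at h
      exact abs_le.1 (h.trans (mem_closedBall_zero_iff.1 hxM))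
  calc volume (closedBall (0 : E) M ∩ {x | |⟪x, ξ⟫_ℝ - c| ≤ w})
      ≤ volume (univ.pi I) := (measure_mono hsub).trans_eq
        (hcoord.measure_preimage (MeasurableSet.univ_pi fun i => by
          simp only [I]; split_ifs <;> exact measurableSet_Icc).nullMeasurableSet)
    _ = ENNReal.ofReal (2 * w) * ENNReal.ofReal (2 * M) ^ n := by
        rw [volume_pi_pi, Fin.prod_univ_succ]
        simp only [I, if_pos, Fin.succ_ne_zero, if_false, Real.volume_Icc, Finset.prod_const,
          Finset.card_univ, Fintype.card_fin]
        ring_nf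

theorem norm_setIntegral_sub_setIntegral_le {α E : Type*} [MeasurableSpace α]
    [NormedAddCommGroup E] [NormedSpace ℝ E] [CompleteSpace E] {μ : Measure α} {f : α → E}
    {A B : Set α} {c : E} {w : ℝ} (hA : MeasurableSet A) (hB : MeasurableSet B)
    (hAfin : μ A ≠ ∞) (hAB : μ A = μ B) (hfA : IntegrableOn f A μ) (hfB : IntegrableOn f B μ)
    (hf : ∀ x ∈ A ∆ B, ‖f x - c‖ ≤ w) :
    ‖∫ x in A, f x ∂μ - ∫ x in B, f x ∂μ‖ ≤ w * μ.real (A ∆ B) := by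
  have hBfin : μ B ≠ ∞ := hAB ▸ hAfin
  set g := fun x => f x - c
  have hgA : IntegrableOn g A μ := hfA.sub (integrableOn_const hAfin)
  have hgB : IntegrableOn g B μ := hfB.sub (integrableOn_const hBfin)
  have hshift : ∫ x in A, f x ∂μ - ∫ x in B, f x ∂μ = ∫ x in A, g x ∂μ - ∫ x in B, g x ∂μ := by
    rw [integral_sub hfA (integrableOn_const hAfin), integral_sub hfB (integrableOn_const hBfin),
      setIntegral_const, setIntegral_const, Measure.real, Measure.real, hAB]
    abel
  have hsplit : ∫ x in A, g x ∂μ - ∫ x in B, g x ∂μ =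
      ∫ x in A \ B, g x ∂μ - ∫ x in B \ A, g x ∂μ := by
    rw [← integral_inter_add_sdiff hB hgA, ← integral_inter_add_sdiff hA hgB, inter_comm B A]
    abel
  have hbound : ∀ S ⊆ A ∆ B, μ S ≠ ∞ → ‖∫ x in S, g x ∂μ‖ ≤ w * μ.real S := fun S hS hSfin =>
    norm_setIntegral_le_of_norm_le_const hSfin.lt_top fun x hx => hf x (hS hx)
  calc ‖∫ x in A, f x ∂μ - ∫ x in B, f x ∂μ‖
      = ‖∫ x in A \ B, g x ∂μ - ∫ x in B \ A, g x ∂μ‖ := by rw [hshift, hsplit]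
    _ ≤ w * μ.real (A \ B) + w * μ.real (B \ A) :=
        (norm_sub_le _ _).trans (add_le_add
          (hbound _ (fun x hx => Or.inl hx) (measure_ne_top_of_subset sdiff_subset hAfin))
          (hbound _ (fun x hx => Or.inr hx) (measure_ne_top_of_subset sdiff_subset hBfin)))
    _ = w * μ.real (A ∆ B) := by rw [measureReal_symmDiff_eq hA hB hAfin hBfin, mul_add]

theorem isCompact_inter_halfspace {E : Type*} [NormedAddCommGroup E] [InnerProductSpace ℝ E]
    {K : Set E} (hK : IsCompact K) (ξ : E) (s : ℝ) : IsCompact (K ∩ {p | ⟪p, ξ⟫_ℝ ≤ s}) :=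
  hK.inter_right (isClosed_le (continuous_id.inner continuous_const) continuous_const)

theorem inner_centroid {d : ℕ} (μ : Measure (EuclideanSpace ℝ (Fin d)))
    {L : Set (EuclideanSpace ℝ (Fin d))} (hL : IntegrableOn (fun x => x) L μ)
    (ξ : EuclideanSpace ℝ (Fin d)) :
    ⟪centroid μ L, ξ⟫_ℝ = (μ L).toReal⁻¹ * ∫ x in L, ⟪x, ξ⟫_ℝ ∂μ := by
  simp_rw [centroid, real_inner_smul_left, real_inner_comm ξ, integral_inner hL]

theorem abs_inner_centroid_sub_centroid_le {d : ℕ} (hd : 0 < d)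
    {K : Set (EuclideanSpace ℝ (Fin d))} (hK : IsCompact K) {M : ℝ} (hM : ∀ x ∈ K, ‖x‖ ≤ M)
    {δ : ℝ} (hδ : 0 < δ) {ξ η : EuclideanSpace ℝ (Fin d)} (hξ : ‖ξ‖ = 1) {s t : ℝ}
    (hA : volume (K ∩ {p | ⟪p, ξ⟫_ℝ ≤ s}) = ENNReal.ofReal δ)
    (hB : volume (K ∩ {p | ⟪p, η⟫_ℝ ≤ t}) = ENNReal.ofReal δ)
    (hst : |s - t| ≤ M * ‖ξ - η‖) :
    |⟪centroid volume (K ∩ {p | ⟪p, ξ⟫_ℝ ≤ s}) - centroid volume (K ∩ {p | ⟪p, η⟫_ℝ ≤ t}), ξ⟫_ℝ|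
      ≤ 8 * M ^ 2 * (2 * M) ^ (d - 1) / δ * ‖ξ - η‖ ^ 2 := by
  set A := K ∩ {p | ⟪p, ξ⟫_ℝ ≤ s}
  set B := K ∩ {p | ⟪p, η⟫_ℝ ≤ t}
  set e := ‖ξ - η‖
  have hAcpt : IsCompact A := isCompact_inter_halfspace hK ξ s
  have hBcpt : IsCompact B := isCompact_inter_halfspace hK η t
  have hM0 : 0 ≤ M := by
    obtain ⟨x, hx, -⟩ := nonempty_of_measure_ne_zero (hA.trans_ne (ENNReal.ofReal_pos.2 hδ).ne')
    exact (norm_nonneg x).trans (hM x hx)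
  have hfar : ∀ x ∈ K, |⟪x, ξ⟫_ℝ - ⟪x, η⟫_ℝ| ≤ M * e := fun x hx => by
    rw [← inner_sub_right]
    exact (abs_real_inner_le_norm x _).trans (mul_le_mul_of_nonneg_right (hM x hx) (norm_nonneg _))
  have hnear : ∀ x ∈ A ∆ B, x ∈ K ∧ |⟪x, ξ⟫_ℝ - s| ≤ 2 * M * e := by
    have he : 0 ≤ M * e := mul_nonneg hM0 (norm_nonneg _)
    rintro x (⟨⟨hx, hxs : ⟪x, ξ⟫_ℝ ≤ s⟩, hxB⟩ | ⟨⟨hx, hxt : ⟪x, η⟫_ℝ ≤ t⟩, hxA⟩)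
    · have hxt : t < ⟪x, η⟫_ℝ := lt_of_not_ge fun h => hxB ⟨hx, h⟩
      refine ⟨hx, abs_le.2 ⟨?_, ?_⟩⟩ <;> linarith [abs_le.1 (hfar x hx), abs_le.1 hst]
    · have hxs : s < ⟪x, ξ⟫_ℝ := lt_of_not_ge fun h => hxA ⟨hx, h⟩
      refine ⟨hx, abs_le.2 ⟨?_, ?_⟩⟩ <;> linarith [abs_le.1 (hfar x hx), abs_le.1 hst]
  have hvolA : (volume A).toReal = δ := by rw [hA, ENNReal.toReal_ofReal hδ.le]
  have hvolB : (volume B).toReal = δ := by rw [hB, ENNReal.toReal_ofReal hδ.le]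
  have hsymm : volume.real (A ∆ B) ≤ 2 * (2 * M * e) * (2 * M) ^ (d - 1) := by
    have hsub : A ∆ B ⊆ closedBall 0 M ∩ {x | |⟪x, ξ⟫_ℝ - s| ≤ 2 * M * e} := fun x hx =>
      ⟨mem_closedBall_zero_iff.2 (hM x (hnear x hx).1), (hnear x hx).2⟩
    have h := (measure_mono hsub).trans
      (volume_closedBall_inter_slab_le (n := d - 1) (by simp; omega) hξ M s (2 * M * e))
    rw [← ENNReal.ofReal_pow (by positivity), ← ENNReal.ofReal_mul (by positivity)] at h
    exact ENNReal.toReal_le_of_le_ofReal (by positivity) h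
  have hφ : Continuous fun x : EuclideanSpace ℝ (Fin d) => ⟪x, ξ⟫_ℝ :=
    continuous_id.inner continuous_const
  have hint : |(∫ x in A, ⟪x, ξ⟫_ℝ) - ∫ x in B, ⟪x, ξ⟫_ℝ| ≤ 2 * M * e * volume.real (A ∆ B) :=
    norm_setIntegral_sub_setIntegral_le hAcpt.isClosed.measurableSet hBcpt.isClosed.measurableSet
      (hA ▸ ENNReal.ofReal_ne_top) (hA.trans hB.symm) (hφ.continuousOn.integrableOn_compact hAcpt)
      (hφ.continuousOn.integrableOn_compact hBcpt) (c := s) fun x hx => (hnear x hx).2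
  rw [inner_sub_left, inner_centroid volume (continuous_id.continuousOn.integrableOn_compact hAcpt),
    inner_centroid volume (continuous_id.continuousOn.integrableOn_compact hBcpt), hvolA, hvolB,
    ← mul_sub, abs_mul, abs_inv, abs_of_pos hδ]
  calc δ⁻¹ * |(∫ x in A, ⟪x, ξ⟫_ℝ) - ∫ x in B, ⟪x, ξ⟫_ℝ|
      ≤ δ⁻¹ * (2 * M * e * (2 * (2 * M * e) * (2 * M) ^ (d - 1))) := by
        gcongr
        exact hint.trans (mul_le_mul_of_nonneg_left hsymm (by positivity))
    _ = 8 * M ^ 2 * (2 * M) ^ (d - 1) / δ * e ^ 2 := by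
        field_simp
        ring

theorem abs_norm_sub_sub_norm_sub_le {E : Type*} [NormedAddCommGroup E] [InnerProductSpace ℝ E]
    {c p q ξ η : E} {s r ε : ℝ} (hξ : ‖ξ‖ = 1) (hη : ‖η‖ = 1)
    (hp : c - p = s • ξ) (hq : c - q = r • η)
    (h₁ : |⟪p - q, ξ⟫_ℝ| ≤ ε) (h₂ : |⟪q - p, η⟫_ℝ| ≤ ε) :
    |‖p - c‖ - ‖q - c‖| ≤ ε := by
  have hpc : ‖p - c‖ = |s| := by rw [norm_sub_rev, hp, norm_smul, hξ, mul_one, Real.norm_eq_abs]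
  have hqc : ‖q - c‖ = |r| := by rw [norm_sub_rev, hq, norm_smul, hη, mul_one, Real.norm_eq_abs]
  have hpq : p - q = r • η - s • ξ := by rw [← hp, ← hq]; abel
  have key : (|s| - |r|) * (|s| + |r|) = r * ⟪q - p, η⟫_ℝ - s * ⟪p - q, ξ⟫_ℝ := by
    rw [← neg_sub p q, hpq]
    simp only [inner_neg_left, inner_sub_left, real_inner_smul_left, real_inner_self_eq_norm_sq,
      hξ, hη, real_inner_comm ξ η]
    linear_combination sq_abs s - sq_abs r
  have hbound : |(|s| - |r|) * (|s| + |r|)| ≤ (|s| + |r|) * ε := by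
    rw [key]
    calc |r * ⟪q - p, η⟫_ℝ - s * ⟪p - q, ξ⟫_ℝ|
        ≤ |s| * |⟪p - q, ξ⟫_ℝ| + |r| * |⟪q - p, η⟫_ℝ| := by
          simpa [abs_mul, add_comm] using abs_sub (r * ⟪q - p, η⟫_ℝ) (s * ⟪p - q, ξ⟫_ℝ)
      _ ≤ |s| * ε + |r| * ε := by gcongr
      _ = (|s| + |r|) * ε := by ring
  rw [hpc, hqc]
  rcases (add_nonneg (abs_nonneg s) (abs_nonneg r)).eq_or_lt with h0 | hpos
  · have hs : |s| = 0 := by linarith [abs_nonneg s, abs_nonneg r]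
    have hr : |r| = 0 := by linarith [abs_nonneg s, abs_nonneg r]
    rw [hs, hr, sub_self, abs_zero]
    exact (abs_nonneg _).trans h₁
  · rw [abs_mul, abs_of_pos hpos, mul_comm] at hbound
    exact le_of_mul_le_mul_left hbound hpos

open Asymptotics in
theorem hasFDerivAt_zero_of_isBigO_sq {E F : Type*} [NormedAddCommGroup E] [NormedSpace ℝ E]
    [NormedAddCommGroup F] [NormedSpace ℝ F] {f : E → F} {x : E}
    (hf : (fun y => f y - f x) =O[𝓝 x] fun y => ‖y - x‖ ^ 2) :
    HasFDerivAt f (0 : E →L[ℝ] F) x :=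
  .of_isLittleO <| by simpa using hf.trans_isLittleO (isLittleO_pow_sub_sub x one_lt_two)

theorem eq_of_norm_sub_le_mul_norm_sub_sq {E F : Type*} [NormedAddCommGroup E]
    [InnerProductSpace ℝ E] [NormedAddCommGroup F] [NormedSpace ℝ F]
    (hE : 1 < Module.rank ℝ E) {f : E → F} {L : ℝ}
    (hf : ∀ ξ η : E, ‖ξ‖ = 1 → ‖η‖ = 1 → ‖f ξ - f η‖ ≤ L * ‖ξ - η‖ ^ 2)
    {ξ η : E} (hξ : ‖ξ‖ = 1) (hη : ‖η‖ = 1) : f ξ = f η := by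
  set n : E → E := fun y => ‖y‖⁻¹ • y
  have hn : ∀ y ≠ 0, ‖n y‖ = 1 := fun y hy => norm_smul_inv_norm hy
  have hderiv : ∀ x ≠ 0, HasFDerivAt (f ∘ n) (0 : E →L[ℝ] F) x := by
    intro x hx
    apply hasFDerivAt_zero_of_isBigO_sq
    have hn_diff : DifferentiableAt ℝ n x :=
      ((differentiableAt_id.norm ℝ hx).inv (norm_ne_zero_iff.2 hx)).smul differentiableAt_id
    have hf_n : (fun y => f (n y) - f (n x)) =O[𝓝 x] fun y => ‖n y - n x‖ ^ 2 :=
      .of_bound L <| (eventually_ne_nhds hx).mono fun y hy => by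
        simpa using hf _ _ (hn y hy) (hn x hx)
    exact hf_n.trans (hn_diff.hasFDerivAt.isBigO_sub.norm_norm.pow 2)
  have hconn := (isConnected_compl_singleton_of_one_lt_rank hE (0 : E)).isPreconnected
  have := isOpen_compl_singleton.is_const_of_fderiv_eq_zero hconn
    (fun x hx => (hderiv x hx).differentiableAt.differentiableWithinAt)
    (fun x hx => (hderiv x hx).fderiv) (x := ξ) (y := η)
    (by simp [← norm_ne_zero_iff, hξ]) (by simp [← norm_ne_zero_iff, hη])
  simpa [n, hξ, hη] using this

theorem surface_of_centers_is_sphere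
    (d : ℕ) (hd : 2 ≤ d)
    (K : Set (EuclideanSpace ℝ (Fin d)))
    (hKcomp : IsCompact K) (hKconv : Convex ℝ K) (hKint : (interior K).Nonempty)
    (δ : ℝ) (hδ : 0 < δ) (hδK : ENNReal.ofReal δ < volume K)
    (t : EuclideanSpace ℝ (Fin d) → ℝ)
    (ht : ∀ ξ : EuclideanSpace ℝ (Fin d), ‖ξ‖ = 1 →
      volume (K ∩ {p | ⟪p, ξ⟫_ℝ ≤ t ξ}) = ENNReal.ofReal δ)
    (hfloat : ∀ ξ : EuclideanSpace ℝ (Fin d), ‖ξ‖ = 1 →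
      ∃ s : ℝ, centroid volume K - centroid volume (K ∩ {p | ⟪p, ξ⟫_ℝ ≤ t ξ}) = s • ξ) :
    ∃ R : ℝ, 0 ≤ R ∧ ∀ ξ : EuclideanSpace ℝ (Fin d), ‖ξ‖ = 1 →
      ‖centroid volume (K ∩ {p | ⟪p, ξ⟫_ℝ ≤ t ξ}) - centroid volume K‖ = R := by
  obtain ⟨M, hM⟩ := hKcomp.isBounded.exists_norm_le
  set g := fun ξ => centroid volume (K ∩ {p | ⟪p, ξ⟫_ℝ ≤ t ξ})
  have hlevel : ∀ ξ η : EuclideanSpace ℝ (Fin d), ‖ξ‖ = 1 → ‖η‖ = 1 →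
      t ξ ≤ t η + M * ‖ξ - η‖ := fun ξ η hξ hη =>
    le_add_mul_norm_sub_of_measure_inter_halfspace_eq volume hKconv hKint hM
      ((ht ξ hξ).trans (ht η hη).symm) (ht η hη ▸ ENNReal.ofReal_ne_top)
      (nonempty_of_measure_ne_zero (ht η hη ▸ (ENNReal.ofReal_pos.2 hδ).ne'))
      ((ht ξ hξ).trans_lt hδK)
  have hflat : ∀ ξ η : EuclideanSpace ℝ (Fin d), ‖ξ‖ = 1 → ‖η‖ = 1 →
      |⟪g ξ - g η, ξ⟫_ℝ| ≤ 8 * M ^ 2 * (2 * M) ^ (d - 1) / δ * ‖ξ - η‖ ^ 2 :=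
    fun ξ η hξ hη => abs_inner_centroid_sub_centroid_le (by omega) hKcomp hM hδ hξ (ht ξ hξ)
      (ht η hη) (abs_sub_le_iff.2
        ⟨by linarith [hlevel ξ η hξ hη], by linarith [norm_sub_rev η ξ ▸ hlevel η ξ hη hξ]⟩)
  have hequal : ∀ ξ η : EuclideanSpace ℝ (Fin d), ‖ξ‖ = 1 → ‖η‖ = 1 →
      ‖‖g ξ - centroid volume K‖ - ‖g η - centroid volume K‖‖
        ≤ 8 * M ^ 2 * (2 * M) ^ (d - 1) / δ * ‖ξ - η‖ ^ 2 := by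
    intro ξ η hξ hη
    obtain ⟨s, hs⟩ := hfloat ξ hξ
    obtain ⟨r, hr⟩ := hfloat η hη
    refine abs_norm_sub_sub_norm_sub_le hξ hη hs hr (hflat ξ η hξ hη) ?_
    simpa [norm_sub_rev] using hflat η ξ hη hξ
  have hrank : 1 < Module.rank ℝ (EuclideanSpace ℝ (Fin d)) :=
    Module.one_lt_rank_of_one_lt_finrank (by simp; omega)
  set ξ₀ : EuclideanSpace ℝ (Fin d) := EuclideanSpace.single ⟨0, by omega⟩ 1
  have hξ₀ : ‖ξ₀‖ = 1 := by simp [ξ₀]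
  exact ⟨_, norm_nonneg _, fun ξ hξ =>
    eq_of_norm_sub_le_mul_norm_sub_sq hrank hequal hξ hξ₀⟩
end

section
/- Let d ≥ 2, let K ⊆ ℝ^d be a convex body and let (δ_n)_{n=1}^∞ be a sequence of positive numbers with δ_n → 0 such that for each n the Dupin floating body of K at level δ_n exists and coincides with the convex floating body K_{δ_n} (that is, K_{δ_n} is nonempty and every supporting hyperplane of K_{δ_n} cuts off from K a set of volume exactly δ_n). If K floats in equilibrium in every direction at each level δ_n, then K is a Euclidean ball: K = closedBall(z, r) for some z ∈ ℝ^d and r > 0. -/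
/-!
By the equilibrium condition, the centroid of the cap of volume `δ n` cut off in direction `ξ`
lies on the line through the centroid `z` of `K` in direction `ξ`. As `δ n → 0` the caps shrink
onto the face of `K` in direction `ξ`, so a limit point of their centroids is a point `z + s • ξ`
of `K` minimizing `⟪·, ξ⟫`. Thus the support function of `K` about `z` equals its radial
function `g`, whence `g ν * ⟪ν, ν'⟫ ≤ g ν'`. Chaining this along a great circle in `k` steps of
angle `θ / k` and using `cos (θ / k) ^ k → 1` shows that `g` is constant, i.e. `K` is a ball.
-/

open MeasureTheory Metric Set Filter
open scoped InnerProductSpace ENNReal Pointwise NNReal Topology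

open Real in
theorem tendsto_cos_div_pow_atTop (θ : ℝ) :
    Tendsto (fun k : ℕ => cos (θ / k) ^ k) atTop (𝓝 1) := by
  have hlower : Tendsto (fun k : ℕ => 1 - θ ^ 2 / 2 / k) atTop (𝓝 1) := by
    have := (tendsto_const_div_atTop_nhds_zero_nat (θ ^ 2 / 2)).const_sub 1
    rwa [sub_zero] at this
  refine tendsto_of_tendsto_of_tendsto_of_le_of_le' hlower tendsto_const_nhds ?_
    (Eventually.of_forall fun k => ?_)
  · filter_upwards [eventually_ge_atTop 1, eventually_ge_atTop ⌈|θ|⌉₊] with k hk1 hkθ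
    have hk : (0 : ℝ) < k := by exact_mod_cast hk1
    have hsq : (θ / k) ^ 2 ≤ 1 := by
      rw [div_pow, div_le_one (by positivity), ← sq_abs]
      exact pow_le_pow_left₀ (abs_nonneg θ) (Nat.ceil_le.mp hkθ) 2
    calc 1 - θ ^ 2 / 2 / k = 1 + k * -((θ / k) ^ 2 / 2) := by field_simp; ring
      _ ≤ (1 + -((θ / k) ^ 2 / 2)) ^ k := one_add_mul_le_pow (by linarith) k
      _ ≤ cos (θ / k) ^ k := by
        gcongr
        · linarith
        · linarith [one_sub_sq_div_two_le_cos (x := θ / k)]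
  · calc cos (θ / k) ^ k ≤ |cos (θ / k)| ^ k := by rw [← abs_pow]; exact le_abs_self _
      _ ≤ 1 := pow_le_one₀ (abs_nonneg _) (abs_cos_le_one _)

section InnerProductSpace

variable {E : Type*} [NormedAddCommGroup E] [InnerProductSpace ℝ E]

theorem exists_norm_eq_one_inner_eq_zero (hE : 2 ≤ Module.finrank ℝ E) (ν : E) :
    ∃ e : E, ‖e‖ = 1 ∧ ⟪ν, e⟫_ℝ = 0 := by
  have : FiniteDimensional ℝ E := Module.finite_of_finrank_pos (by omega)
  have hrank : 0 < Module.finrank ℝ (ℝ ∙ ν)ᗮ := by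
    have := (ℝ ∙ ν).finrank_add_finrank_orthogonal
    have := finrank_span_le_card (R := ℝ) ({ν} : Set E)
    rw [Set.toFinset_singleton, Finset.card_singleton] at this
    omega
  obtain ⟨⟨w, hw⟩, hw0⟩ := Module.finrank_pos_iff_exists_ne_zero.mp hrank
  have hw0 : w ≠ 0 := by simpa using hw0
  refine ⟨‖w‖⁻¹ • w, norm_smul_inv_norm hw0, ?_⟩
  rw [inner_smul_right, Submodule.mem_orthogonal_singleton_iff_inner_right.mp hw, mul_zero]

theorem exists_eq_cos_smul_add_sin_smul (hE : 2 ≤ Module.finrank ℝ E) {ν ν' : E}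
    (hν : ‖ν‖ = 1) (hν' : ‖ν'‖ = 1) :
    ∃ (e : E) (θ : ℝ), ‖e‖ = 1 ∧ ⟪ν, e⟫_ℝ = 0 ∧ ν' = Real.cos θ • ν + Real.sin θ • e := by
  set c := ⟪ν, ν'⟫_ℝ
  set w := ν' - c • ν
  have hνw : ⟪ν, w⟫_ℝ = 0 := by
    rw [inner_sub_right, inner_smul_right, real_inner_self_eq_norm_sq, hν]; ring
  have hw : ‖w‖ ^ 2 = 1 - c ^ 2 := by
    rw [norm_sub_sq_real, norm_smul, hν, hν', inner_smul_right, real_inner_comm,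
      Real.norm_eq_abs]
    ring_nf; rw [sq_abs]; ring
  have hc : |c| ≤ 1 := by
    simpa [hν, hν'] using abs_real_inner_le_norm ν ν'
  obtain ⟨e, he, hνe, hew⟩ : ∃ e : E, ‖e‖ = 1 ∧ ⟪ν, e⟫_ℝ = 0 ∧ ‖w‖ • e = w := by
    by_cases hw0 : w = 0
    · obtain ⟨e, he, hνe⟩ := exists_norm_eq_one_inner_eq_zero hE ν
      exact ⟨e, he, hνe, by simp [hw0]⟩
    · refine ⟨‖w‖⁻¹ • w, norm_smul_inv_norm hw0, ?_, ?_⟩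
      · rw [inner_smul_right, hνw, mul_zero]
      · rw [smul_inv_smul₀ (norm_ne_zero_iff.mpr hw0)]
  refine ⟨e, Real.arccos c, he, hνe, ?_⟩
  rw [Real.cos_arccos (neg_le_of_abs_le hc) (le_of_abs_le hc), Real.sin_arccos, ← hw,
    Real.sqrt_sq (norm_nonneg w), hew, add_sub_cancel]

theorem inner_cos_smul_add_sin_smul {ν e : E} (hν : ‖ν‖ = 1) (he : ‖e‖ = 1)
    (hνe : ⟪ν, e⟫_ℝ = 0) (α β : ℝ) :
    ⟪Real.cos α • ν + Real.sin α • e, Real.cos β • ν + Real.sin β • e⟫_ℝ = Real.cos (α - β) := by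
  simp only [inner_add_left, inner_add_right, real_inner_smul_left, real_inner_smul_right,
    real_inner_self_eq_norm_sq, hν, he, hνe, real_inner_comm ν e, Real.cos_sub]
  ring

theorem le_of_forall_mul_inner_le (hE : 2 ≤ Module.finrank ℝ E) {g : E → ℝ}
    (hg : ∀ ν ν' : E, ‖ν‖ = 1 → ‖ν'‖ = 1 → g ν * ⟪ν, ν'⟫_ℝ ≤ g ν') {ν ν' : E}
    (hν : ‖ν‖ = 1) (hν' : ‖ν'‖ = 1) : g ν ≤ g ν' := by
  obtain ⟨e, θ, he, hνe, rfl⟩ := exists_eq_cos_smul_add_sin_smul hE hν hν'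
  set γ : ℝ → E := fun α => Real.cos α • ν + Real.sin α • e
  have hγ_inner : ∀ α β, ⟪γ α, γ β⟫_ℝ = Real.cos (α - β) :=
    inner_cos_smul_add_sin_smul hν he hνe
  have hγ_norm : ∀ α, ‖γ α‖ = 1 := fun α => by
    rw [← pow_eq_one_iff_of_nonneg (norm_nonneg _) two_ne_zero, ← real_inner_self_eq_norm_sq,
      hγ_inner, sub_self, Real.cos_zero]
  -- walking along the great circle `γ` in `k` steps of angle `θ / k`
  have hwalk : ∀ k : ℕ, k ≠ 0 → 0 ≤ Real.cos (θ / k) →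
      g ν * Real.cos (θ / k) ^ k ≤ g (γ θ) := by
    intro k hk hcos
    have hstep : ∀ i : ℕ, g ν * Real.cos (θ / k) ^ i ≤ g (γ (i * (θ / k))) := by
      intro i
      induction i with
      | zero => simp [γ]
      | succ i ih =>
        calc g ν * Real.cos (θ / k) ^ (i + 1)
            = g ν * Real.cos (θ / k) ^ i * Real.cos (θ / k) := by ring
          _ ≤ g (γ (i * (θ / k))) * ⟪γ (i * (θ / k)), γ ((i + 1 : ℕ) * (θ / k))⟫_ℝ := by
            have hangle : (i : ℝ) * (θ / k) - (i + 1 : ℕ) * (θ / k) = -(θ / k) := by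
              push_cast; ring
            rw [hγ_inner, hangle, Real.cos_neg]
            exact mul_le_mul_of_nonneg_right ih hcos
          _ ≤ g (γ ((i + 1 : ℕ) * (θ / k))) := hg _ _ (hγ_norm _) (hγ_norm _)
    simpa [mul_div_cancel₀ θ (Nat.cast_ne_zero.mpr hk)] using hstep k
  have hcos_pos : ∀ᶠ k : ℕ in atTop, 0 < Real.cos (θ / k) :=
    ((Real.continuous_cos.tendsto 0).comp (tendsto_const_div_atTop_nhds_zero_nat θ)).eventually
      (lt_mem_nhds (by rw [Real.cos_zero]; exact one_pos))
  refine le_of_tendsto (by simpa using (tendsto_cos_div_pow_atTop θ).const_mul (g ν)) ?_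
  filter_upwards [eventually_ne_atTop 0, hcos_pos] with k hk hcos
  exact hwalk k hk hcos.le

theorem exists_norm_eq_one_eq_norm_smul [Nontrivial E] (v : E) :
    ∃ ξ : E, ‖ξ‖ = 1 ∧ v = ‖v‖ • ξ := by
  by_cases hv : v = 0
  · obtain ⟨ξ, hξ⟩ := exists_norm_eq E zero_le_one
    exact ⟨ξ, hξ, by simp [hv]⟩
  · exact ⟨‖v‖⁻¹ • v, norm_smul_inv_norm hv, (smul_inv_smul₀ (norm_ne_zero_iff.mpr hv) v).symm⟩

theorem Convex.add_smul_mem_of_abs_le {K : Set E} (hK : Convex ℝ K) {z ξ : E} {r a : ℝ}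
    (hneg : z - r • ξ ∈ K) (hpos : z + r • ξ ∈ K) (ha : |a| ≤ r) : z + a • ξ ∈ K := by
  have hline : Convex ℝ ((fun s : ℝ => z + s • ξ) ⁻¹' K) := by
    intro b hb c hc μ η hμ hη hμη
    obtain rfl : η = 1 - μ := by linarith
    rw [mem_preimage]
    convert hK hb hc hμ hη hμη using 1
    simp only [smul_eq_mul]
    module
  exact hline.ordConnected.out (by simpa [sub_eq_add_neg] using hneg) hpos
    ⟨neg_le_of_abs_le ha, le_of_abs_le ha⟩

theorem Convex.eq_closedBall_of_forall_isMinOn_inner (hE : 2 ≤ Module.finrank ℝ E)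
    {K : Set E} (hK : Convex ℝ K) (z : E)
    (hmin : ∀ ξ : E, ‖ξ‖ = 1 →
      ∃ s : ℝ, z + s • ξ ∈ K ∧ IsMinOn (fun p => ⟪p, ξ⟫_ℝ) K (z + s • ξ)) :
    ∃ r, K = closedBall z r := by
  have : Nontrivial E := Module.nontrivial_of_finrank_pos (R := ℝ) (by omega)
  choose! s hsK hsmin using hmin
  have hs_le : ∀ ξ : E, ‖ξ‖ = 1 → ∀ p ∈ K, s ξ ≤ ⟪p - z, ξ⟫_ℝ := fun ξ hξ p hp => by
    have := isMinOn_iff.mp (hsmin ξ hξ) p hp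
    rw [inner_add_left, real_inner_smul_left, real_inner_self_eq_norm_sq, hξ] at this
    rw [inner_sub_left]
    linarith
  -- `-s ξ` is both the support function and the radial function of `K` about `z`
  have hg : ∀ ν ν' : E, ‖ν‖ = 1 → ‖ν'‖ = 1 → -s ν * ⟪ν, ν'⟫_ℝ ≤ -s ν' := fun ν ν' hν hν' => by
    have := hs_le ν' hν' _ (hsK ν hν)
    rw [add_sub_cancel_left, real_inner_smul_left] at this
    linarith
  obtain ⟨ξ₀, hξ₀⟩ := exists_norm_eq E zero_le_one
  obtain ⟨r, hs⟩ : ∃ r, ∀ ξ : E, ‖ξ‖ = 1 → s ξ = -r := ⟨-s ξ₀, fun ξ hξ => by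
    rw [neg_neg]
    exact neg_injective (le_antisymm (le_of_forall_mul_inner_le hE hg hξ hξ₀)
      (le_of_forall_mul_inner_le hE hg hξ₀ hξ))⟩
  refine ⟨r, Subset.antisymm (fun p hp => ?_) (fun p hp => ?_)⟩
  · obtain ⟨ξ, hξ, hpξ⟩ := exists_norm_eq_one_eq_norm_smul (p - z)
    have := hs_le (-ξ) (by rwa [norm_neg]) p hp
    rw [hs (-ξ) (by rwa [norm_neg]), hpξ, inner_neg_right, real_inner_smul_left,
      real_inner_self_eq_norm_sq, hξ] at this
    rw [mem_closedBall, dist_eq_norm]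
    linarith
  · obtain ⟨ξ, hξ, hpξ⟩ := exists_norm_eq_one_eq_norm_smul (p - z)
    have hneg := hsK ξ hξ
    have hpos := hsK (-ξ) (by rwa [norm_neg])
    rw [hs ξ hξ, neg_smul, ← sub_eq_add_neg] at hneg
    rw [hs (-ξ) (by rwa [norm_neg]), neg_smul_neg] at hpos
    rw [mem_closedBall, dist_eq_norm] at hp
    rw [← add_sub_cancel z p, hpξ]
    exact hK.add_smul_mem_of_abs_le hneg hpos (by rwa [abs_norm])

end InnerProductSpace

theorem eventually_lt_add_of_tendsto_measure_cap_zero {X ι : Type*} [TopologicalSpace X]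
    [MeasurableSpace X] {μ : Measure X} [μ.IsOpenPosMeasure] {K : Set X} {f : X → ℝ}
    (hf : Continuous f) {l : Filter ι} {t : ι → ℝ}
    (hcap : Tendsto (fun i => μ (K ∩ {p | f p ≤ t i})) l (𝓝 0))
    {y : X} (hy : y ∈ closure (interior K)) {ε : ℝ} (hε : 0 < ε) :
    ∀ᶠ i in l, t i < f y + ε := by
  set U := interior K ∩ {p | f p < f y + ε}
  have hlt_open : IsOpen {p | f p < f y + ε} := isOpen_lt hf continuous_const
  obtain ⟨q, hq_lt, hq_int⟩ := mem_closure_iff.mp hy _ hlt_open (by simpa using hε)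
  have hU_pos : 0 < μ U := (isOpen_interior.inter hlt_open).measure_pos μ ⟨q, hq_int, hq_lt⟩
  filter_upwards [hcap.eventually (gt_mem_nhds hU_pos)] with i hi
  by_contra! hti
  refine (measure_mono fun p hp => ?_).not_gt hi
  exact ⟨interior_subset hp.1, hp.2.le.trans hti⟩

theorem isMinOn_of_tendsto_of_tendsto_measure_cap_zero {X ι : Type*} [TopologicalSpace X]
    [MeasurableSpace X] {μ : Measure X} [μ.IsOpenPosMeasure] {K : Set X} {f : X → ℝ}
    (hf : Continuous f) (hK : K ⊆ closure (interior K)) {l : Filter ι} [l.NeBot] {t : ι → ℝ}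
    (hcap : Tendsto (fun i => μ (K ∩ {p | f p ≤ t i})) l (𝓝 0))
    {x : ι → X} {x' : X} (hx : ∀ i, f (x i) ≤ t i) (hlim : Tendsto x l (𝓝 x')) :
    IsMinOn f K x' :=
  isMinOn_iff.mpr fun _ hy => le_of_forall_pos_le_add fun _ hε =>
    le_of_tendsto ((hf.tendsto x').comp hlim)
      ((eventually_lt_add_of_tendsto_measure_cap_zero hf hcap (hK hy) hε).mono
        fun i hi => (hx i).trans hi.le)

section Centroid

variable {d : ℕ} {μ : Measure (EuclideanSpace ℝ (Fin d))}

theorem centroid_eq_setAverage (L : Set (EuclideanSpace ℝ (Fin d))) :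
    centroid μ L = ⨍ x in L, x ∂μ := by
  rw [centroid, setAverage_eq, measureReal_def]

theorem centroid_mem_of_isCompact [IsFiniteMeasureOnCompacts μ]
    {L : Set (EuclideanSpace ℝ (Fin d))} (hconv : Convex ℝ L) (hcomp : IsCompact L) (h0 : μ L ≠ 0) : centroid μ L ∈ L := by
  rw [centroid_eq_setAverage]
  exact hconv.set_average_mem hcomp.isClosed h0 hcomp.measure_lt_top.ne
    (ae_restrict_mem hcomp.measurableSet) (continuous_id.continuousOn.integrableOn_compact hcomp)

theorem exists_isMinOn_inner_centroid_add_smul [IsFiniteMeasureOnCompacts μ]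
    [μ.IsOpenPosMeasure] {K : Set (EuclideanSpace ℝ (Fin d))} (hKcomp : IsCompact K)
    (hKconv : Convex ℝ K) (hKint : (interior K).Nonempty) {ξ : EuclideanSpace ℝ (Fin d)}
    {t : ℕ → ℝ} (hcap_pos : ∀ n, μ (K ∩ {p | ⟪p, ξ⟫_ℝ ≤ t n}) ≠ 0)
    (hcap : Tendsto (fun n => μ (K ∩ {p | ⟪p, ξ⟫_ℝ ≤ t n})) atTop (𝓝 0))
    (hfloat : ∀ n, ∃ s : ℝ, centroid μ K - centroid μ (K ∩ {p | ⟪p, ξ⟫_ℝ ≤ t n}) = s • ξ) :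
    ∃ s : ℝ, centroid μ K + s • ξ ∈ K ∧
      IsMinOn (fun p => ⟪p, ξ⟫_ℝ) K (centroid μ K + s • ξ) := by
  set z := centroid μ K
  set x := fun n => centroid μ (K ∩ {p | ⟪p, ξ⟫_ℝ ≤ t n})
  have hinner : Continuous fun p : EuclideanSpace ℝ (Fin d) => ⟪p, ξ⟫_ℝ :=
    continuous_id.inner continuous_const
  have hx_mem : ∀ n, x n ∈ K ∩ {p | ⟪p, ξ⟫_ℝ ≤ t n} := fun n =>
    centroid_mem_of_isCompact
      (hKconv.inter (convex_halfSpace_le ⟨fun _ _ => inner_add_left .., fun _ _ =>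
        real_inner_smul_left ..⟩ _))
      (hKcomp.inter_right (isClosed_le hinner continuous_const)) (hcap_pos n)
  have hx_line : ∀ n, x n - z ∈ ℝ ∙ ξ := fun n => by
    obtain ⟨s, hs⟩ := hfloat n
    exact Submodule.mem_span_singleton.mpr ⟨-s, by rw [neg_smul, ← hs, neg_sub]⟩
  obtain ⟨x', hx'K, φ, hφ, hlim⟩ := hKcomp.tendsto_subseq fun n => (hx_mem n).1
  obtain ⟨s, hs⟩ := Submodule.mem_span_singleton.mp <|
    (Submodule.closed_of_finiteDimensional _).mem_of_tendsto (hlim.sub_const z)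
      (Eventually.of_forall fun n => hx_line (φ n))
  have hx' : z + s • ξ = x' := by rw [hs, add_sub_cancel]
  have hK : K ⊆ closure (interior K) := by
    rw [hKconv.closure_interior_eq_closure_of_nonempty_interior hKint]
    exact subset_closure
  refine ⟨s, hx' ▸ hx'K, hx' ▸ isMinOn_of_tendsto_of_tendsto_measure_cap_zero hinner hK
    (hcap.comp hφ.tendsto_atTop) (fun n => (hx_mem (φ n)).2) hlim⟩

end Centroid

theorem ball_of_floats_at_small_levels_general
    (d : ℕ) (hd : 2 ≤ d)
    (K : Set (EuclideanSpace ℝ (Fin d)))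
    (hKcomp : IsCompact K) (hKconv : Convex ℝ K) (hKint : (interior K).Nonempty)
    (δ : ℕ → ℝ) (hδpos : ∀ n, 0 < δ n)
    (hδlim : Tendsto δ atTop (nhds 0))
    (t : ℕ → EuclideanSpace ℝ (Fin d) → ℝ)
    (ht : ∀ n, ∀ ξ : EuclideanSpace ℝ (Fin d), ‖ξ‖ = 1 →
      volume (K ∩ {p | ⟪p, ξ⟫_ℝ ≤ t n ξ}) = ENNReal.ofReal (δ n))
    -- K floats in equilibrium in every direction at each level δ_n
    (hfloat : ∀ n, ∀ ξ : EuclideanSpace ℝ (Fin d), ‖ξ‖ = 1 →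
      ∃ s : ℝ, centroid volume K - centroid volume (K ∩ {p | ⟪p, ξ⟫_ℝ ≤ t n ξ}) = s • ξ) :
    ∃ (z : EuclideanSpace ℝ (Fin d)) (r : ℝ), 0 < r ∧ K = Metric.closedBall z r := by
  have hmin : ∀ ξ : EuclideanSpace ℝ (Fin d), ‖ξ‖ = 1 → ∃ s : ℝ, centroid volume K + s • ξ ∈ K ∧
      IsMinOn (fun p => ⟪p, ξ⟫_ℝ) K (centroid volume K + s • ξ) := fun ξ hξ =>
    exists_isMinOn_inner_centroid_add_smul hKcomp hKconv hKint
      (fun n => by rw [ht n ξ hξ]; exact (ENNReal.ofReal_pos.mpr (hδpos n)).ne')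
      (by simpa only [ht _ ξ hξ, ENNReal.ofReal_zero] using ENNReal.tendsto_ofReal hδlim)
      (hfloat · ξ hξ)
  obtain ⟨r, hr⟩ := hKconv.eq_closedBall_of_forall_isMinOn_inner
    (by rwa [finrank_euclideanSpace_fin]) _ hmin
  have : Nonempty (Fin d) := ⟨⟨0, by omega⟩⟩
  rw [hr, interior_closedBall'] at hKint
  exact ⟨_, r, nonempty_ball.mp hKint, hr⟩

theorem ball_of_floats_at_small_levels
    (d : ℕ) (hd : 2 ≤ d)
    (K : Set (EuclideanSpace ℝ (Fin d)))
    (hKcomp : IsCompact K) (hKconv : Convex ℝ K) (hKint : (interior K).Nonempty)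
    (δ : ℕ → ℝ) (hδpos : ∀ n, 0 < δ n)
    (hδK : ∀ n, ENNReal.ofReal (δ n) < volume K)
    (hδlim : Tendsto δ atTop (nhds 0))
    (t : ℕ → EuclideanSpace ℝ (Fin d) → ℝ)
    (ht : ∀ n, ∀ ξ : EuclideanSpace ℝ (Fin d), ‖ξ‖ = 1 →
      volume (K ∩ {p | ⟪p, ξ⟫_ℝ ≤ t n ξ}) = ENNReal.ofReal (δ n))
    -- the convex floating body K_{δ_n} is nonempty
    (hne : ∀ n, {p : EuclideanSpace ℝ (Fin d) |
      ∀ ξ : EuclideanSpace ℝ (Fin d), ‖ξ‖ = 1 → t n ξ ≤ ⟪p, ξ⟫_ℝ}.Nonempty)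
    -- and it is the Dupin floating body: every supporting hyperplane of K_{δ_n}
    -- cuts off from K a set of volume exactly δ_n
    (hdupin : ∀ n, ∀ ν : EuclideanSpace ℝ (Fin d), ∀ s : ℝ, ‖ν‖ = 1 →
      (∀ y ∈ {p : EuclideanSpace ℝ (Fin d) |
          ∀ ξ : EuclideanSpace ℝ (Fin d), ‖ξ‖ = 1 → t n ξ ≤ ⟪p, ξ⟫_ℝ}, s ≤ ⟪y, ν⟫_ℝ) →
      (∃ y ∈ {p : EuclideanSpace ℝ (Fin d) |
          ∀ ξ : EuclideanSpace ℝ (Fin d), ‖ξ‖ = 1 → t n ξ ≤ ⟪p, ξ⟫_ℝ}, ⟪y, ν⟫_ℝ = s) →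
      volume (K ∩ {p | ⟪p, ν⟫_ℝ ≤ s}) = ENNReal.ofReal (δ n))
    -- K floats in equilibrium in every direction at each level δ_n
    (hfloat : ∀ n, ∀ ξ : EuclideanSpace ℝ (Fin d), ‖ξ‖ = 1 →
      ∃ s : ℝ, centroid volume K - centroid volume (K ∩ {p | ⟪p, ξ⟫_ℝ ≤ t n ξ}) = s • ξ) :
    ∃ (z : EuclideanSpace ℝ (Fin d)) (r : ℝ), 0 < r ∧ K = Metric.closedBall z r :=
  ball_of_floats_at_small_levels_general d hd K hKcomp hKconv hKint δ hδpos hδlim t ht hfloat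
end
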